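/- For all coefficient sequences a, b, the ψ-derivative of the Ward product satisfies the symmetric ψ-Leibniz rule D(a·b) = (D a) ⋆_{1,0} b + a·(D b). -/

import Mathlib

open Finset

/-- The ψ-factorial: ψₙ! = ψ₁ψ₂⋯ψₙ, with ψ₀! = 1. -/
noncomputable def psiFact (ψ : ℕ → ℂ) : ℕ → ℂ
  | 0 => 1
  | n + 1 => psiFact ψ n * ψ (n + 1)

/-- The ψ-binomial coefficient binomψ(n,k) = ψₙ!/(ψₖ!·ψ_{n−k}!). -/
noncomputable def psiBinom (ψ : ℕ → ℂ) (n k : ℕ) : ℂ :=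
  psiFact ψ n / (psiFact ψ k * psiFact ψ (n - k))

/-- The Fontané numbers F(n,k) = (ψₙ − ψₖ)/ψ_{n−k}. -/
noncomputable def Fker (ψ : ℕ → ℂ) (n k : ℕ) : ℂ :=
  (ψ n - ψ k) / ψ (n - k)

/-- The Ward product of coefficient sequences. -/
noncomputable def wardMul (ψ : ℕ → ℂ) (a b : ℕ → ℂ) (n : ℕ) : ℂ :=
  ∑ k ∈ Finset.range (n + 1), psiBinom ψ n k * a k * b (n - k)

/-- The opposite Fontané product ⋆_{i,j} of coefficient sequences. -/
noncomputable def oppFontane (ψ : ℕ → ℂ) (i j : ℕ) (a b : ℕ → ℂ) (n : ℕ) : ℂ :=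
  ∑ k ∈ Finset.range (n + 1), Fker ψ (n + i) (n - k + j) * psiBinom ψ n k * a k * b (n - k)

/-- The ψ-derivative on coefficient sequences: the shift (D a)ₙ = a_{n+1}. -/
def Dpsi (a : ℕ → ℂ) (n : ℕ) : ℂ := a (n + 1)

/-!
The ψ-Pascal rule binomψ(n+1,k+1) = F(n+1,n−k)·binomψ(n,k) + binomψ(n,k+1) for k < n is the
splitting ψ_{n+1} = (ψ_{n+1} − ψ_{n−k}) + ψ_{n−k} of the factor that ψ_{n+1}! gains over ψₙ!.
Summing it against a_{k+1} b_{n−k} turns the coefficients of D(a·b) into those of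
(D a) ⋆_{1,0} b and a·(D b); the boundary terms match because binomψ(n,0) = binomψ(n,n) = 1 and,
as ψ₀ = 0, F(n+1,0) = 1.
-/

section PsiCalculus

variable {ψ : ℕ → ℂ}

theorem psiFact_ne_zero (hψ : ∀ n : ℕ, 1 ≤ n → ψ n ≠ 0) (m : ℕ) : psiFact ψ m ≠ 0 := by
  induction m with
  | zero => exact one_ne_zero
  | succ k ih => exact mul_ne_zero ih (hψ _ k.succ_pos)

theorem psiBinom_zero_right (hψ : ∀ n : ℕ, 1 ≤ n → ψ n ≠ 0) (n : ℕ) : psiBinom ψ n 0 = 1 := by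
  simp [psiBinom, psiFact, psiFact_ne_zero hψ]

theorem psiBinom_self (hψ : ∀ n : ℕ, 1 ≤ n → ψ n ≠ 0) (n : ℕ) : psiBinom ψ n n = 1 := by
  simp [psiBinom, psiFact, psiFact_ne_zero hψ]

theorem Fker_zero_right (hψ0 : ψ 0 = 0) {n : ℕ} (hn : ψ n ≠ 0) : Fker ψ n 0 = 1 := by
  simp [Fker, hψ0, hn]

theorem psiBinom_succ_succ (hψ : ∀ n : ℕ, 1 ≤ n → ψ n ≠ 0) {n k : ℕ} (hk : k < n) :
    psiBinom ψ (n + 1) (k + 1) = Fker ψ (n + 1) (n - k) * psiBinom ψ n k + psiBinom ψ n (k + 1) := by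
  obtain ⟨d, hd⟩ : ∃ d, n - k = d + 1 := ⟨n - k - 1, by omega⟩
  have h₁ : n + 1 - (k + 1) = d + 1 := by omega
  have h₂ : n + 1 - (d + 1) = k + 1 := by omega
  have h₃ : n - (k + 1) = d := by omega
  have hfact := psiFact_ne_zero hψ
  have hk₁ : ψ (k + 1) ≠ 0 := hψ _ k.succ_pos
  have hd₁ : ψ (d + 1) ≠ 0 := hψ _ d.succ_pos
  simp only [psiBinom, Fker, psiFact, hd, h₁, h₂, h₃]
  field_simp
  ring

theorem Dpsi_wardMul_eq (hψ : ∀ n : ℕ, 1 ≤ n → ψ n ≠ 0) (a b : ℕ → ℂ) (n : ℕ) :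
    Dpsi (wardMul ψ a b) n =
      ∑ k ∈ range (n + 1), psiBinom ψ (n + 1) (k + 1) * a (k + 1) * b (n - k) + a 0 * b (n + 1) := by
  simp only [Dpsi, wardMul, sum_range_succ' _ (n + 1), psiBinom_zero_right hψ, Nat.add_sub_add_right,
    Nat.sub_zero, one_mul]

theorem wardMul_Dpsi_right_eq (hψ : ∀ n : ℕ, 1 ≤ n → ψ n ≠ 0) (a b : ℕ → ℂ) (n : ℕ) :
    wardMul ψ a (Dpsi b) n =
      ∑ k ∈ range n, psiBinom ψ n (k + 1) * a (k + 1) * b (n - k) + a 0 * b (n + 1) := by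
  simp only [Dpsi, wardMul, sum_range_succ' _ n, psiBinom_zero_right hψ, Nat.sub_zero, one_mul]
  congr 1
  refine sum_congr rfl fun k hk => ?_
  rw [show n - (k + 1) + 1 = n - k by have := mem_range.mp hk; omega]

end PsiCalculus

theorem Dpsi_wardMul_symm_general (ψ : ℕ → ℂ) (hψ0 : ψ 0 = 0) (hψ : ∀ n : ℕ, 1 ≤ n → ψ n ≠ 0)
    (a b : ℕ → ℂ) (n : ℕ) :
    Dpsi (wardMul ψ a b) n
      = oppFontane ψ 1 0 (Dpsi a) b n + wardMul ψ a (Dpsi b) n := by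
  have hpascal : ∑ k ∈ range n, psiBinom ψ (n + 1) (k + 1) * a (k + 1) * b (n - k) =
      ∑ k ∈ range n, Fker ψ (n + 1) (n - k) * psiBinom ψ n k * a (k + 1) * b (n - k) +
        ∑ k ∈ range n, psiBinom ψ n (k + 1) * a (k + 1) * b (n - k) := by
    rw [← sum_add_distrib]
    refine sum_congr rfl fun k hk => ?_
    rw [psiBinom_succ_succ hψ (mem_range.mp hk)]
    ring
  rw [Dpsi_wardMul_eq hψ, wardMul_Dpsi_right_eq hψ, oppFontane, sum_range_succ, sum_range_succ,
    hpascal]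
  simp only [Dpsi, Nat.add_zero, Nat.sub_self, psiBinom_self hψ,
    Fker_zero_right hψ0 (hψ (n + 1) n.succ_pos)]
  ring

/-- The symmetric ψ-Leibniz rule: D(a·b) = (D a) ⋆_{1,0} b + a·(D b). -/
theorem Dpsi_wardMul_symm (ψ : ℕ → ℂ) (hψ0 : ψ 0 = 0) (hψ1 : ψ 1 = 1) (hψ : ∀ n : ℕ, 1 ≤ n → ψ n ≠ 0)
    (a b : ℕ → ℂ) (n : ℕ) :
    Dpsi (wardMul ψ a b) n
      = oppFontane ψ 1 0 (Dpsi a) b n + wardMul ψ a (Dpsi b) n :=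
  Dpsi_wardMul_symm_general ψ hψ0 hψ a b n
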